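/- If S is a weak content R-algebra and T is a weak content S-algebra, then T is a weak content R-algebra. -/

import Mathlib

/-- The Ohm-Rush content of an element `f` of the `R`-algebra `S`:
the intersection of all ideals `I` of `R` such that `f ∈ IS`. -/
def orc (R S : Type*) [CommRing R] [CommRing S] [Algebra R S] (f : S) : Ideal R :=
  sInf {I : Ideal R | f ∈ I.map (algebraMap R S)}

/-- `S` is an Ohm-Rush `R`-algebra if `f ∈ orc(f)·S` for every `f ∈ S`. -/
def IsOhmRushAlgebra (R S : Type*) [CommRing R] [CommRing S] [Algebra R S] : Prop :=
  ∀ f : S, f ∈ (orc R S f).map (algebraMap R S)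

/-- `S` is a content `R`-algebra if it is a faithfully flat Ohm-Rush `R`-algebra
satisfying the Dedekind–Mertens condition. -/
def IsContentAlgebra (R S : Type*) [CommRing R] [CommRing S] [Algebra R S] : Prop :=
  Module.FaithfullyFlat R S ∧ IsOhmRushAlgebra R S ∧
    ∀ f g : S, ∃ n : ℕ, 1 ≤ n ∧
      orc R S f ^ n * orc R S g = orc R S f ^ (n - 1) * orc R S (f * g)

/-- `S` is a semicontent `R`-algebra if it is a faithfully flat Ohm-Rush `R`-algebra and
for every multiplicatively closed subset `W ⊆ R` and all `f, g ∈ S` with `orc(f)·R_W = R_W`,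
one has `orc(fg)·R_W = orc(g)·R_W`. -/
def IsSemicontentAlgebra (R S : Type*) [CommRing R] [CommRing S] [Algebra R S] : Prop :=
  Module.FaithfullyFlat R S ∧ IsOhmRushAlgebra R S ∧
    ∀ (W : Submonoid R) (f g : S),
      (orc R S f).map (algebraMap R (Localization W)) = ⊤ →
      (orc R S (f * g)).map (algebraMap R (Localization W)) =
        (orc R S g).map (algebraMap R (Localization W))

/-- `S` is a weak content `R`-algebra if it is an Ohm-Rush `R`-algebra and
`orc(f)·orc(g) ⊆ √(orc(fg))` for all `f, g ∈ S`. -/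
def IsWeakContentAlgebra (R S : Type*) [CommRing R] [CommRing S] [Algebra R S] : Prop :=
  IsOhmRushAlgebra R S ∧
    ∀ f g : S, orc R S f * orc R S g ≤ (orc R S (f * g)).radical

/-- `S` is a Gaussian `R`-algebra if it is an Ohm-Rush `R`-algebra and
`orc(fg) = orc(f)·orc(g)` for all `f, g ∈ S`. -/
def IsGaussianAlgebra (R S : Type*) [CommRing R] [CommRing S] [Algebra R S] : Prop :=
  IsOhmRushAlgebra R S ∧ ∀ f g : S, orc R S (f * g) = orc R S f * orc R S g

/-! In a tower of Ohm-Rush algebras `R → S → T`, the `R`-content of `f ∈ T` is generated by the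
`R`-contents of the elements of its `S`-content. Hence `c_R(f) c_R(g)` is generated by products
`c_R(u) c_R(v)` with `u ∈ c_S(f)`, `v ∈ c_S(g)`, each contained in `√c_R(uv)`. Since
`uv ∈ √c_S(fg)`, some power `(uv)^n` with `n ≥ 1` lies in `c_S(fg)`, and the weak content property
of `S` gives `√c_R(uv) ⊆ √c_R((uv)^n) ⊆ √c_R(fg)`. -/

theorem orc_le_of_mem_map {R S : Type*} [CommRing R] [CommRing S] [Algebra R S]
    {f : S} {I : Ideal R} (hf : f ∈ I.map (algebraMap R S)) : orc R S f ≤ I :=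
  sInf_le hf

theorem IsWeakContentAlgebra.radical_orc_le_radical_orc_pow {R S : Type*} [CommRing R]
    [CommRing S] [Algebra R S] (hS : IsWeakContentAlgebra R S) (w : S) {n : ℕ} (hn : n ≠ 0) :
    (orc R S w).radical ≤ (orc R S (w ^ n)).radical := by
  rw [← Nat.one_le_iff_ne_zero] at hn
  induction n, hn using Nat.le_induction with
  | base => rw [pow_one]
  | succ n _ ih =>
    calc (orc R S w).radical ≤ (orc R S (w ^ n)).radical ⊓ (orc R S w).radical := le_inf ih le_rfl
      _ = (orc R S (w ^ n) * orc R S w).radical := (Ideal.radical_mul _ _).symm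
      _ ≤ (orc R S (w ^ (n + 1))).radical := by
        rw [Ideal.radical_le_radical_iff, pow_succ]
        exact hS.2 _ _

section Tower

variable {R S T : Type*} [CommRing R] [CommRing S] [CommRing T]
  [Algebra R S] [Algebra S T] [Algebra R T] [IsScalarTower R S T]

theorem Ideal.map_algebraMap_map_algebraMap (I : Ideal R) :
    (I.map (algebraMap R S)).map (algebraMap S T) = I.map (algebraMap R T) := by
  rw [Ideal.map_map, ← IsScalarTower.algebraMap_eq]

theorem orc_le_orc_of_mem_orc {f : T} {u : S} (hu : u ∈ orc S T f) :
    orc R S u ≤ orc R T f :=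
  le_sInf fun I hI ↦ orc_le_of_mem_map <| orc_le_of_mem_map (S := T) (by
    rwa [Ideal.map_algebraMap_map_algebraMap]) hu

theorem IsOhmRushAlgebra.mem_map_of_orc_le_map (hT : IsOhmRushAlgebra S T) {f : T}
    {I : Ideal R} (h : orc S T f ≤ I.map (algebraMap R S)) :
    f ∈ I.map (algebraMap R T) := by
  rw [← Ideal.map_algebraMap_map_algebraMap (S := S)]
  exact Ideal.map_mono h (hT f)

theorem IsOhmRushAlgebra.trans (hS : IsOhmRushAlgebra R S) (hT : IsOhmRushAlgebra S T) :
    IsOhmRushAlgebra R T := fun _ ↦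
  hT.mem_map_of_orc_le_map fun u hu ↦ Ideal.map_mono (orc_le_orc_of_mem_orc hu) (hS u)

theorem IsOhmRushAlgebra.orc_eq_iSup_orc (hS : IsOhmRushAlgebra R S)
    (hT : IsOhmRushAlgebra S T) (f : T) :
    orc R T f = ⨆ u ∈ orc S T f, orc R S u :=
  le_antisymm
    (orc_le_of_mem_map <| hT.mem_map_of_orc_le_map fun u hu ↦
      Ideal.map_mono (le_iSup₂ (f := fun u (_ : u ∈ orc S T f) ↦ orc R S u) u hu) (hS u))
    (iSup₂_le fun _ ↦ orc_le_orc_of_mem_orc)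

theorem IsWeakContentAlgebra.radical_orc_le_of_mem_radical (hS : IsWeakContentAlgebra R S)
    {f : T} {w : S} (hw : w ∈ (orc S T f).radical) :
    (orc R S w).radical ≤ (orc R T f).radical := by
  obtain ⟨n, hn⟩ := hw
  have hn' : w ^ (n + 1) ∈ orc S T f := by
    rw [pow_succ]
    exact Ideal.mul_mem_right _ _ hn
  exact (hS.radical_orc_le_radical_orc_pow w n.succ_ne_zero).trans
    (Ideal.radical_mono (orc_le_orc_of_mem_orc hn'))

end Tower

/-- Transitivity of the weak content algebra property. -/
theorem isWeakContentAlgebra_trans (R S T : Type*) [CommRing R] [CommRing S] [CommRing T]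
    [Algebra R S] [Algebra S T] [Algebra R T] [IsScalarTower R S T]
    (hS : IsWeakContentAlgebra R S) (hT : IsWeakContentAlgebra S T) :
    IsWeakContentAlgebra R T := by
  refine ⟨hS.1.trans hT.1, fun f g ↦ ?_⟩
  rw [hS.1.orc_eq_iSup_orc hT.1 f, hS.1.orc_eq_iSup_orc hT.1 g]
  simp only [Ideal.iSup_mul, Ideal.mul_iSup, iSup_le_iff]
  intro v hv u hu
  exact (hS.2 u v).trans <|
    hS.radical_orc_le_of_mem_radical <| hT.2 f g (Ideal.mul_mem_mul hu hv)
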